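/- arXiv:2403.09653 — 2 statements merged into one kernel-verified Lean document; each statement's English description precedes it below -/
import Mathlib

section
/- Let k be a field, n ≥ 1, L ⊆ ℤⁿ a subgroup, p ∈ ℝⁿ, and σ₁, σ₂ ⊆ {1,…,n}. Assume: (H1) there exists u₁ ∈ L with (u₁)_i = ⌊p⌋_i for all i ∈ σ₁ ∩ σ₂; (H2) there exists u₂ ∈ L with (u₂)_i = 0 for all i ∈ σ₁ ∩ σ₂, (u₂)_i > 0 for all i ∈ σ₁ ∖ σ₂, and (u₂)_i < 0 for all i ∈ σ₂ ∖ σ₁. Then there exist u ∈ L, k₀ ∈ ℕ, and α, β ∈ ℕⁿ such that (x^σ̂₁ y^σ̂₂)^{k₀} · m_p = x^α y^β · x^u y^{−u} in T; equivalently, k₀·(𝟙_{σ₁ᶜ}, 𝟙_{σ₂ᶜ}) + (⌊p⌋ − u, −⌊p⌋ + u) ∈ ℕ^{2n}. (In the paper, hypothesis (H1) follows from smoothness of the toric fan Σ with ray sets σ₁, σ₂ of maximal cones, and (H2) follows from the Separation Lemma for convex polyhedral cones.) -/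
/-!
STATEMENT 1 (Lemma 3 of the paper): under a smoothness-type hypothesis (H1) and a
separation hypothesis (H2), some power of `x^σ̂₁ y^σ̂₂` times the monomial label `m_p`
equals `x^α y^β · x^u y^{-u}` in the Laurent ring `T`.
-/

noncomputable section

open MvPolynomial

/-- The Laurent polynomial ring `T` in `x₁,…,xₙ,y₁,…,yₙ` over `k`. -/
abbrev LaurentT (k : Type*) [Field k] (n : ℕ) :=
  AddMonoidAlgebra k ((Fin n → ℤ) × (Fin n → ℤ))

/-- The polynomial ring `S = k[x₁,…,xₙ,y₁,…,yₙ]`; `Sum.inl i ↦ xᵢ`, `Sum.inr i ↦ yᵢ`. -/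
abbrev PolyS (k : Type*) [Field k] (n : ℕ) := MvPolynomial (Fin n ⊕ Fin n) k

/-- The natural inclusion `S → T`. -/
def incl (k : Type*) [Field k] (n : ℕ) : PolyS k n →+* LaurentT k n :=
  MvPolynomial.eval₂Hom (algebraMap k (LaurentT k n))
    (Sum.elim
      (fun i => AddMonoidAlgebra.single (Pi.single i 1, 0) (1 : k))
      (fun i => AddMonoidAlgebra.single (0, Pi.single i 1) (1 : k)))

/-- The monomial label `m_p = x^{⌊p⌋} y^{-⌊p⌋} ∈ T` of a point `p ∈ ℝⁿ`. -/
def monLabel (k : Type*) [Field k] (n : ℕ) (p : Fin n → ℝ) : LaurentT k n :=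
  AddMonoidAlgebra.single ((fun i => ⌊p i⌋), fun i => -⌊p i⌋) (1 : k)

/-- `x^σ̂ = ∏_{i ∉ σ} xᵢ ∈ S`. -/
def xhat (k : Type*) [Field k] (n : ℕ) (σ : Finset (Fin n)) : PolyS k n :=
  ∏ i ∈ σᶜ, X (Sum.inl i)

/-- `y^σ̂ = ∏_{i ∉ σ} yᵢ ∈ S`. -/
def yhat (k : Type*) [Field k] (n : ℕ) (σ : Finset (Fin n)) : PolyS k n :=
  ∏ i ∈ σᶜ, X (Sum.inr i)

/-!
Write `f = ⌊p⌋` and `𝟙_σ̂` for the indicator of `σᶜ`. The product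
`(x^σ̂₁ y^σ̂₂)^{k₀} · m_p` is the monomial with exponent `(k₀ 𝟙_σ̂₁ + f, k₀ 𝟙_σ̂₂ - f)`,
so it suffices to find `u ∈ L` with `u ≤ f` on `σ₁` and `f ≤ u` on `σ₂`: then any
`k₀ ≥ ‖f - u‖_∞` makes both exponents of `x^α y^β = (x^σ̂₁ y^σ̂₂)^{k₀} m_p · x^{-u} y^u`
nonnegative. Such a `u` is `u₁ - m u₂` for `m ≥ ‖u₁ - f‖_∞`: it equals `f` on `σ₁ ∩ σ₂`
and the multiple of `u₂` pushes it below `f` on `σ₁ ∖ σ₂` and above `f` on `σ₂ ∖ σ₁`.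
-/

section IntVectors

variable {ι : Type*}

lemma exists_nat_abs_le [Finite ι] (v : ι → ℤ) : ∃ m : ℕ, ∀ i, |v i| ≤ m := by
  obtain ⟨m, hm⟩ := Finite.exists_le fun i => (v i).natAbs
  exact ⟨m, fun i => by rw [Int.abs_eq_natAbs]; exact_mod_cast hm i⟩

lemma AddSubgroup.exists_mem_le_on_and_ge_on [Finite ι] [DecidableEq ι]
    (L : AddSubgroup (ι → ℤ)) (f : ι → ℤ) {σ₁ σ₂ : Finset ι}
    (H1 : ∃ u₁ ∈ L, ∀ i ∈ σ₁ ∩ σ₂, u₁ i = f i)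
    (H2 : ∃ u₂ ∈ L, (∀ i ∈ σ₁ ∩ σ₂, u₂ i = 0) ∧ (∀ i ∈ σ₁ \ σ₂, 0 < u₂ i) ∧
      (∀ i ∈ σ₂ \ σ₁, u₂ i < 0)) :
    ∃ u ∈ L, (∀ i ∈ σ₁, u i ≤ f i) ∧ (∀ i ∈ σ₂, f i ≤ u i) := by
  obtain ⟨u₁, hu₁L, hu₁⟩ := H1
  obtain ⟨u₂, hu₂L, hzero, hpos, hneg⟩ := H2
  obtain ⟨m, hm⟩ := exists_nat_abs_le (u₁ - f)
  refine ⟨u₁ - (m : ℤ) • u₂, L.sub_mem hu₁L (L.zsmul_mem hu₂L m), fun i hi₁ => ?_,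
    fun i hi₂ => ?_⟩
  all_goals
    have hbound := abs_le.mp (hm i)
    simp only [Pi.sub_apply, Pi.smul_apply, smul_eq_mul] at hbound ⊢
  · by_cases hi₂ : i ∈ σ₂
    · have hi := Finset.mem_inter.mpr ⟨hi₁, hi₂⟩
      simp [hu₁ i hi, hzero i hi]
    · nlinarith [hpos i (Finset.mem_sdiff.mpr ⟨hi₁, hi₂⟩)]
  · by_cases hi₁ : i ∈ σ₁
    · have hi := Finset.mem_inter.mpr ⟨hi₁, hi₂⟩
      simp [hu₁ i hi, hzero i hi]
    · nlinarith [hneg i (Finset.mem_sdiff.mpr ⟨hi₂, hi₁⟩)]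

lemma le_nsmul_indicator_compl_add {v w : ι → ℤ} {σ : Finset ι} {k₀ : ℕ}
    (hσ : ∀ i ∈ σ, v i ≤ w i) (hk₀ : ∀ i, v i - w i ≤ k₀) :
    v ≤ k₀ • (σ : Set ι)ᶜ.indicator 1 + w := by
  intro i
  by_cases hi : i ∈ σ
  · simpa [hi] using hσ i hi
  · simpa [hi, sub_le_iff_le_add] using hk₀ i

end IntVectors

lemma AddMonoidAlgebra.exists_single_eq_natCast_mul_single {ι : Type*} (k : Type*)
    [Semiring k] {a w : (ι → ℤ) × (ι → ℤ)} (h : w ≤ a) :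
    ∃ α β : ι → ℕ, single a (1 : k) =
      single ((fun i => (α i : ℤ)), fun i => (β i : ℤ)) 1 * single w 1 := by
  refine ⟨fun i => (a.1 i - w.1 i).toNat, fun i => (a.2 i - w.2 i).toNat, ?_⟩
  rw [single_mul_single, one_mul]
  congr 1
  ext i
  · have : w.1 i ≤ a.1 i := h.1 i
    simp only [Int.ofNat_toNat, Prod.fst_add, Pi.add_apply]
    omega
  · have : w.2 i ≤ a.2 i := h.2 i
    simp only [Int.ofNat_toNat, Prod.snd_add, Pi.add_apply]
    omega

lemma incl_xhat (k : Type*) [Field k] (n : ℕ) (σ : Finset (Fin n)) :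
    incl k n (xhat k n σ) = AddMonoidAlgebra.single ((σ : Set (Fin n))ᶜ.indicator 1, 0) 1 := by
  rw [xhat, map_prod]
  simp only [incl, coe_eval₂Hom, eval₂_X, Sum.elim_inl]
  rw [AddMonoidAlgebra.prod_single]
  congr 1
  · ext i
    · simp [Prod.fst_sum, Finset.sum_apply, Pi.single_apply, Set.indicator_apply]
    · simp [Prod.snd_sum]
  · simp

lemma incl_yhat (k : Type*) [Field k] (n : ℕ) (σ : Finset (Fin n)) :
    incl k n (yhat k n σ) = AddMonoidAlgebra.single (0, (σ : Set (Fin n))ᶜ.indicator 1) 1 := by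
  rw [yhat, map_prod]
  simp only [incl, coe_eval₂Hom, eval₂_X, Sum.elim_inr]
  rw [AddMonoidAlgebra.prod_single]
  congr 1
  · ext i
    · simp [Prod.fst_sum]
    · simp [Prod.snd_sum, Finset.sum_apply, Pi.single_apply, Set.indicator_apply]
  · simp

lemma incl_xhat_mul_yhat_pow_mul_monLabel (k : Type*) [Field k] (n : ℕ) (p : Fin n → ℝ)
    (σ₁ σ₂ : Finset (Fin n)) (k₀ : ℕ) :
    incl k n ((xhat k n σ₁ * yhat k n σ₂) ^ k₀) * monLabel k n p =
      AddMonoidAlgebra.single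
        (k₀ • (σ₁ : Set (Fin n))ᶜ.indicator 1 + fun i => ⌊p i⌋,
          k₀ • (σ₂ : Set (Fin n))ᶜ.indicator 1 + fun i => -⌊p i⌋) 1 := by
  rw [map_pow, map_mul, incl_xhat, incl_yhat, AddMonoidAlgebra.single_mul_single,
    AddMonoidAlgebra.single_pow, monLabel, AddMonoidAlgebra.single_mul_single]
  simp

theorem clear_denominators_general (k : Type*) [Field k] (n : ℕ)
    (L : AddSubgroup (Fin n → ℤ)) (p : Fin n → ℝ) (σ₁ σ₂ : Finset (Fin n))
    (H1 : ∃ u₁ ∈ L, ∀ i ∈ σ₁ ∩ σ₂, u₁ i = ⌊p i⌋)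
    (H2 : ∃ u₂ ∈ L, (∀ i ∈ σ₁ ∩ σ₂, u₂ i = 0) ∧ (∀ i ∈ σ₁ \ σ₂, 0 < u₂ i) ∧
      (∀ i ∈ σ₂ \ σ₁, u₂ i < 0)) :
    ∃ u ∈ L, ∃ (k₀ : ℕ) (α β : Fin n → ℕ),
      incl k n ((xhat k n σ₁ * yhat k n σ₂) ^ k₀) * monLabel k n p
        = AddMonoidAlgebra.single ((fun i => (α i : ℤ)), fun i => (β i : ℤ)) (1 : k)
            * AddMonoidAlgebra.single (u, -u) (1 : k) := by
  obtain ⟨u, huL, hσ₁, hσ₂⟩ := L.exists_mem_le_on_and_ge_on (fun i => ⌊p i⌋) H1 H2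
  obtain ⟨k₀, hk₀⟩ := exists_nat_abs_le fun i => ⌊p i⌋ - u i
  have hle : (u, -u) ≤ (k₀ • (σ₁ : Set (Fin n))ᶜ.indicator 1 + fun i => ⌊p i⌋,
      k₀ • (σ₂ : Set (Fin n))ᶜ.indicator 1 + fun i => -⌊p i⌋) :=
    ⟨le_nsmul_indicator_compl_add hσ₁ fun i => by linarith [neg_abs_le (⌊p i⌋ - u i), hk₀ i],
      le_nsmul_indicator_compl_add (fun i hi => neg_le_neg (hσ₂ i hi))
        fun i => by simp only [Pi.neg_apply]; linarith [le_abs_self (⌊p i⌋ - u i), hk₀ i]⟩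
  obtain ⟨α, β, h⟩ := AddMonoidAlgebra.exists_single_eq_natCast_mul_single k hle
  exact ⟨u, huL, k₀, α, β, by rw [incl_xhat_mul_yhat_pow_mul_monLabel, h]⟩

/-- Assuming (H1): some `u₁ ∈ L` agrees with `⌊p⌋` on `σ₁ ∩ σ₂`, and (H2): some `u₂ ∈ L`
vanishes on `σ₁ ∩ σ₂`, is positive on `σ₁ ∖ σ₂` and negative on `σ₂ ∖ σ₁`, there exist
`u ∈ L`, `k₀ ∈ ℕ` and `α, β ∈ ℕⁿ` with
`(x^σ̂₁ y^σ̂₂)^{k₀} · m_p = x^α y^β · x^u y^{-u}` in `T`. -/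
theorem clear_denominators (k : Type*) [Field k] (n : ℕ) (hn : 1 ≤ n)
    (L : AddSubgroup (Fin n → ℤ)) (p : Fin n → ℝ) (σ₁ σ₂ : Finset (Fin n))
    (H1 : ∃ u₁ ∈ L, ∀ i ∈ σ₁ ∩ σ₂, u₁ i = ⌊p i⌋)
    (H2 : ∃ u₂ ∈ L, (∀ i ∈ σ₁ ∩ σ₂, u₂ i = 0) ∧ (∀ i ∈ σ₁ \ σ₂, 0 < u₂ i) ∧
      (∀ i ∈ σ₂ \ σ₁, u₂ i < 0)) :
    ∃ u ∈ L, ∃ (k₀ : ℕ) (α β : Fin n → ℕ),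
      incl k n ((xhat k n σ₁ * yhat k n σ₂) ^ k₀) * monLabel k n p
        = AddMonoidAlgebra.single ((fun i => (α i : ℤ)), fun i => (β i : ℤ)) (1 : k)
            * AddMonoidAlgebra.single (u, -u) (1 : k) :=
  clear_denominators_general k n L p σ₁ σ₂ H1 H2

end
end

section
/- Let k be a field, n ≥ 1, A an abelian group, and π : ℤⁿ → A a group homomorphism with kernel L. Let ψ : k[x₁,…,xₙ,y₁,…,yₙ] → k[A × ℕⁿ] be the k-algebra homomorphism into the monoid algebra of A × ℕⁿ determined by ψ(xᵢ) = the monomial of (π(eᵢ), eᵢ) and ψ(yᵢ) = the monomial of (0, eᵢ), so that ψ(x^u y^v) is the monomial of (π(u), u+v) for u, v ∈ ℕⁿ. Then the kernel of ψ equals the ideal ⟨x^u y^v − x^v y^u : u, v ∈ ℕⁿ, π(u) = π(v)⟩, i.e., ker ψ equals the Lawrence ideal J_L = ⟨x^a y^b − x^b y^a : a, b ∈ ℕⁿ, a − b ∈ L⟩. -/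
/-!
STATEMENT 3: the kernel of the `k`-algebra map
`ψ : k[x₁,…,xₙ,y₁,…,yₙ] → k[A × ℕⁿ]`, `xᵢ ↦ (π(eᵢ), eᵢ)`, `yᵢ ↦ (0, eᵢ)`,
is the Lawrence ideal `J_L` for `L = ker π`.
-/

noncomputable section

open MvPolynomial

/-- The monomial `x^a y^b ∈ S` for `a, b ∈ ℕⁿ`. -/
def xymon (k : Type*) [Field k] (n : ℕ) (a b : Fin n → ℕ) : PolyS k n :=
  (∏ i, X (Sum.inl i) ^ a i) * ∏ i, X (Sum.inr i) ^ b i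

/-- The Lawrence ideal `J_L = ⟨x^a y^b - x^b y^a : a, b ∈ ℕⁿ, a - b ∈ L⟩ ⊆ S`. -/
def lawrenceIdeal (k : Type*) [Field k] (n : ℕ) (L : AddSubgroup (Fin n → ℤ)) :
    Ideal (PolyS k n) :=
  Ideal.span { f | ∃ a b : Fin n → ℕ,
    ((fun i => (a i : ℤ)) - (fun i => (b i : ℤ))) ∈ L ∧
    f = xymon k n a b - xymon k n b a }

/-- The map `ψ : S → k[A × ℕⁿ]` with `ψ(xᵢ)` the monomial of `(π(eᵢ), eᵢ)` and
`ψ(yᵢ)` the monomial of `(0, eᵢ)`. -/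
def psiMap (k : Type*) [Field k] (n : ℕ) (A : Type*) [AddCommGroup A]
    (π : (Fin n → ℤ) →+ A) : PolyS k n →+* AddMonoidAlgebra k (A × (Fin n → ℕ)) :=
  MvPolynomial.eval₂Hom (algebraMap k (AddMonoidAlgebra k (A × (Fin n → ℕ))))
    (Sum.elim
      (fun i => AddMonoidAlgebra.single (π (Pi.single i 1), Pi.single i 1) (1 : k))
      (fun i => AddMonoidAlgebra.single (0, Pi.single i 1) (1 : k)))

section Aux

variable {k : Type*} [Field k] {n : ℕ} {A : Type*} [AddCommGroup A]
  (π : (Fin n → ℤ) →+ A)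

lemma xymon_mul (a b c d : Fin n → ℕ) :
    xymon k n a b * xymon k n c d = xymon k n (a + c) (b + d) := by
  simp only [xymon, Pi.add_apply, pow_add, Finset.prod_mul_distrib]
  ring

lemma sum_smul_single_int (a : Fin n → ℕ) :
    ∑ i, a i • Pi.single i (1 : ℤ) = fun j => (a j : ℤ) := by
  funext j
  rw [Finset.sum_apply]
  simp [Pi.single_apply, smul_ite, Finset.sum_ite_eq]

lemma sum_smul_single_nat (a : Fin n → ℕ) :
    ∑ i, a i • Pi.single i (1 : ℕ) = a := by
  funext j
  rw [Finset.sum_apply]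
  simp [Pi.single_apply, smul_ite, Finset.sum_ite_eq]

lemma psi_xymon (a b : Fin n → ℕ) :
    psiMap k n A π (xymon k n a b) =
      AddMonoidAlgebra.single (π (fun i => (a i : ℤ)), a + b) (1 : k) := by
  unfold psiMap xymon
  rw [map_mul, map_prod, map_prod]
  simp only [map_pow, coe_eval₂Hom, eval₂_X, Sum.elim_inl, Sum.elim_inr,
    AddMonoidAlgebra.single_pow, one_pow]
  rw [AddMonoidAlgebra.prod_single, AddMonoidAlgebra.prod_single,
    AddMonoidAlgebra.single_mul_single]
  congr 1
  · simp only [Prod.smul_mk, smul_zero]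
    have h1 : (∑ x, (a x • π (Pi.single x 1), a x • Pi.single x (1 : ℕ)))
        = (π (fun i => (a i : ℤ)), a) := by
      have e1 : ∀ x : Fin n, ((a x • π (Pi.single x 1), a x • Pi.single x (1 : ℕ)) : A × (Fin n → ℕ))
          = (π (a x • Pi.single (M := fun _ : Fin n => ℤ) x 1), a x • Pi.single x (1 : ℕ)) := by
        intro x; rw [map_nsmul]
      rw [Finset.sum_congr rfl fun x _ => e1 x, Prod.ext_iff]
      constructor
      · rw [Prod.fst_sum]
        simp only
        rw [← map_sum, sum_smul_single_int]
      · rw [Prod.snd_sum]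
        simpa using sum_smul_single_nat a
    have h2 : (∑ x, ((0 : A), b x • Pi.single x (1 : ℕ))) = (0, b) := by
      rw [Prod.ext_iff]
      constructor
      · rw [Prod.fst_sum]; simp
      · rw [Prod.snd_sum]
        simpa using sum_smul_single_nat b
    rw [h1, h2, Prod.mk_add_mk, add_zero]
  · simp

lemma monomial_eq_xymon (s : (Fin n ⊕ Fin n) →₀ ℕ) :
    (monomial s (1 : k)) = xymon k n (fun i => s (Sum.inl i)) (fun i => s (Sum.inr i)) := by
  rw [monomial_eq, C_1, one_mul, Finsupp.prod_pow, Fintype.prod_sum_type]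
  rfl

/-- The exponent map on monomial exponents. -/
def sig (s : (Fin n ⊕ Fin n) →₀ ℕ) : A × (Fin n → ℕ) :=
  (π (fun i => (s (Sum.inl i) : ℤ)), (fun i => s (Sum.inl i)) + (fun i => s (Sum.inr i)))

lemma psi_monomial (s : (Fin n ⊕ Fin n) →₀ ℕ) (c : k) :
    psiMap k n A π (monomial s c) = AddMonoidAlgebra.single (sig π s) c := by
  rw [show (monomial s c : PolyS k n) = C c * monomial s 1 by rw [C_mul_monomial, mul_one],
    map_mul, monomial_eq_xymon, psi_xymon]
  have hC : psiMap k n A π (C c) = AddMonoidAlgebra.single 0 c := by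
    unfold psiMap
    rw [eval₂Hom_C, AddMonoidAlgebra.coe_algebraMap]
    simp
  rw [hC, AddMonoidAlgebra.single_mul_single, zero_add, mul_one]
  rfl

lemma mem_lawrence {L : AddSubgroup (Fin n → ℤ)} (hL : ∀ v, v ∈ L ↔ π v = 0)
    (a b c d : Fin n → ℕ) (hab : a + b = c + d)
    (hpi : π (fun i => (a i : ℤ)) = π (fun i => (c i : ℤ))) :
    xymon k n a b - xymon k n c d ∈ lawrenceIdeal k n L := by
  set m : Fin n → ℕ := fun i => min (a i) (c i) with hm
  set p : Fin n → ℕ := fun i => min (b i) (d i) with hp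
  set u : Fin n → ℕ := fun i => a i - m i with hu
  set v : Fin n → ℕ := fun i => c i - m i with hv
  have habd : ∀ i, a i + b i = c i + d i := fun i => congrFun hab i
  have key : xymon k n a b - xymon k n c d
      = xymon k n m p * (xymon k n u v - xymon k n v u) := by
    rw [mul_sub, xymon_mul, xymon_mul]
    have e1 : m + u = a := by
      funext i; have := habd i; simp only [Pi.add_apply, hm, hu]; omega
    have e2 : p + v = b := by
      funext i; have := habd i; simp only [Pi.add_apply, hm, hp, hv]; omega
    have e3 : m + v = c := by
      funext i; have := habd i; simp only [Pi.add_apply, hm, hv]; omega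
    have e4 : p + u = d := by
      funext i; have := habd i; simp only [Pi.add_apply, hm, hp, hu]; omega
    rw [e1, e2, e3, e4]
  rw [key]
  apply Ideal.mul_mem_left
  apply Ideal.subset_span
  refine ⟨u, v, ?_, rfl⟩
  rw [hL]
  have : ((fun i => (u i : ℤ)) - fun i => (v i : ℤ))
      = ((fun i => (a i : ℤ)) - fun i => (c i : ℤ)) := by
    funext i
    simp only [Pi.sub_apply, hu, hv, hm]
    omega
  rw [this, map_sub, hpi, sub_self]

end Aux

/-- `ker ψ = J_L` where `L = ker π`. -/
theorem ker_psi_eq_lawrenceIdeal (k : Type*) [Field k] (n : ℕ) (hn : 1 ≤ n)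
    (A : Type*) [AddCommGroup A] (π : (Fin n → ℤ) →+ A)
    (L : AddSubgroup (Fin n → ℤ)) (hL : ∀ v, v ∈ L ↔ π v = 0) :
    RingHom.ker (psiMap k n A π) = lawrenceIdeal k n L := by
  classical
  apply le_antisymm
  · -- ker ψ ⊆ J_L, by induction on support size
    intro f hf
    rw [RingHom.mem_ker] at hf
    suffices H : ∀ N (f : PolyS k n), f.support.card ≤ N → psiMap k n A π f = 0 →
        f ∈ lawrenceIdeal k n L by
      exact H f.support.card f le_rfl hf
    intro N
    induction N with
    | zero =>
      intro f h0 _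
      have : f = 0 := by
        rwa [Nat.le_zero, Finset.card_eq_zero, MvPolynomial.support_eq_empty] at h0
      simp [this]
    | succ N ih =>
      intro f hcard hf
      by_cases hf0 : f = 0
      · simp [hf0]
      obtain ⟨s, hs⟩ : f.support.Nonempty :=
        Finset.nonempty_of_ne_empty (fun h => hf0 (MvPolynomial.support_eq_empty.mp h))
      -- evaluate ψ f at the point sig s
      have hsum : ∑ s' ∈ f.support,
          (if sig π s' = sig π s then coeff s' f else 0) = 0 := by
        have h0 : (psiMap k n A π f).coeff (sig π s) = (0 : k) := by rw [hf]; rfl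
        rw [MvPolynomial.as_sum f, map_sum] at h0
        rw [AddMonoidAlgebra.coeff_sum, Finsupp.finset_sum_apply] at h0
        calc ∑ s' ∈ f.support, (if sig π s' = sig π s then coeff s' f else 0)
            = ∑ s' ∈ f.support, (psiMap k n A π (monomial s' (coeff s' f))).coeff (sig π s) :=
              Finset.sum_congr rfl fun s' _ => by
                rw [psi_monomial, AddMonoidAlgebra.coeff_single, Finsupp.single_apply]
          _ = 0 := h0
      obtain ⟨t, ht, htne, htsig⟩ : ∃ t ∈ f.support, t ≠ s ∧ sig π t = sig π s := by
        by_contra hcon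
        push_neg at hcon
        have : ∑ s' ∈ f.support,
            (if sig π s' = sig π s then coeff s' f else 0) = coeff s f := by
          rw [Finset.sum_eq_single s]
          · rw [if_pos rfl]
          · intro t' ht' htne'
            rw [if_neg (hcon t' ht' htne')]
          · intro h; exact absurd hs h
        rw [hsum] at this
        exact (MvPolynomial.mem_support_iff.mp hs) this.symm
      -- the binomial
      set B : PolyS k n := monomial s (coeff s f) - monomial t (coeff s f) with hB
      have hBmem : B ∈ lawrenceIdeal k n L := by
        have : B = C (coeff s f) * (monomial s 1 - monomial t 1) := by
          rw [mul_sub, C_mul_monomial, C_mul_monomial, mul_one]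
        rw [this]
        apply Ideal.mul_mem_left
        rw [monomial_eq_xymon, monomial_eq_xymon]
        apply mem_lawrence π hL
        · funext i
          have := congrArg Prod.snd htsig
          exact (congrFun this i).symm
        · exact (congrArg Prod.fst htsig).symm
      have hBpsi : psiMap k n A π B = 0 := by
        rw [hB, map_sub, psi_monomial, psi_monomial, htsig, sub_self]
      set g : PolyS k n := f - B with hg
      have hgpsi : psiMap k n A π g = 0 := by
        rw [hg, map_sub, hf, hBpsi, sub_zero]
      have hgsupp : g.support ⊆ f.support.erase s := by
        intro v hv
        have hcv : coeff v g ≠ 0 := MvPolynomial.mem_support_iff.mp hv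
        rw [hg, hB] at hcv
        simp only [MvPolynomial.coeff_sub, MvPolynomial.coeff_monomial] at hcv
        rcases eq_or_ne v s with rfl | hvs
        · exfalso
          apply hcv
          rw [if_pos rfl, if_neg htne]
          ring
        · rw [Finset.mem_erase]
          refine ⟨hvs, ?_⟩
          rw [MvPolynomial.mem_support_iff]
          intro hzero
          rcases eq_or_ne t v with rfl | htv
          · exact absurd hzero (MvPolynomial.mem_support_iff.mp ht)
          · apply hcv
            rw [hzero, if_neg (fun h => hvs h.symm), if_neg htv]
            ring
      have hgcard : g.support.card ≤ N := by
        calc g.support.card ≤ (f.support.erase s).card := Finset.card_le_card hgsupp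
          _ = f.support.card - 1 := Finset.card_erase_of_mem hs
          _ ≤ N := by omega
      have hgmem := ih g hgcard hgpsi
      have : f = g + B := by rw [hg]; ring
      rw [this]
      exact Ideal.add_mem _ hgmem hBmem
  · -- J_L ⊆ ker ψ
    rw [lawrenceIdeal, Ideal.span_le]
    rintro f ⟨a, b, habL, rfl⟩
    rw [SetLike.mem_coe, RingHom.mem_ker, map_sub, psi_xymon, psi_xymon]
    have hpi : π (fun i => (a i : ℤ)) = π (fun i => (b i : ℤ)) := by
      have := (hL _).mp habL
      rw [map_sub] at this
      exact sub_eq_zero.mp this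
    rw [hpi, add_comm a b, sub_self]

end
end
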